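/- Let X be a d-mode tensor in ℝ^{I₁×⋯×I_d}, let r = (r₁,…,r_d) be a target rank, let X̂ be the rank-r STHOSVD approximation of X with processing order ρ = [1,2,…,d], and let X̂_opt be a best rank-r approximation of X. Then ‖X − X̂‖_F ≤ √d · ‖X − X̂_opt‖_F. -/

import Mathlib

open MeasureTheory ProbabilityTheory BigOperators Matrix

noncomputable section

/-- A `d`-mode tensor with dimensions `I 0 × ⋯ × I (d-1)`. -/
abbrev Tensor (d : ℕ) (I : Fin d → ℕ) : Type := (∀ j, Fin (I j)) → ℝ

namespace Tensor

variable {d : ℕ} {I J : Fin d → ℕ}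

/-- Square of the Frobenius norm of a tensor. -/
def frobSq (X : Tensor d I) : ℝ := ∑ i, (X i) ^ 2

/-- Frobenius norm of a tensor. -/
def frobNorm (X : Tensor d I) : ℝ := Real.sqrt (frobSq X)

/-- Mode-`j` product of a tensor with a square matrix `A ∈ ℝ^{I_j × I_j}`. -/
def modeMul (X : Tensor d I) (j : Fin d) (A : Matrix (Fin (I j)) (Fin (I j)) ℝ) :
    Tensor d I :=
  fun i => ∑ k, A (i j) k * X (Function.update i j k)

/-- `modeMulFirst X A t = X ×₁ A₁ ×₂ A₂ ⋯ ×ₜ Aₜ` (the first `t` modes, square matrices). -/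
def modeMulFirst (X : Tensor d I) (A : ∀ j, Matrix (Fin (I j)) (Fin (I j)) ℝ) : ℕ → Tensor d I
  | 0 => X
  | t + 1 =>
    if h : t < d then modeMul (modeMulFirst X A t) ⟨t, h⟩ (A ⟨t, h⟩)
    else modeMulFirst X A t

/-- Simultaneous mode product in every mode: `multiMul G A = G ×₁ A₁ ⋯ ×_d A_d`,
where `A j ∈ ℝ^{I_j × J_j}` and `G` has dimensions `J`. -/
def multiMul (G : Tensor d J) (A : ∀ j, Matrix (Fin (I j)) (Fin (J j)) ℝ) : Tensor d I :=
  fun i => ∑ k : ∀ j, Fin (J j), (∏ j, A j (i j) (k j)) * G k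

/-- Mode-`j` unfolding of a tensor, as a matrix with rows indexed by `Fin (I j)` and
columns indexed by the remaining modes. -/
def unfold (X : Tensor d I) (j : Fin d) :
    Matrix (Fin (I j)) (∀ k : {k : Fin d // k ≠ j}, Fin (I k.1)) ℝ :=
  Matrix.of fun a b => X fun k => if h : k = j then Fin.cast (congrArg I h.symm) a else b ⟨k, h⟩

end Tensor

/-- `singularValues A i` is the `(i+1)`-st largest singular value of `A`
(0-based indexing; `0` when `i` exceeds the number of rows). -/
def singularValues {m n : Type*} [Fintype m] [Fintype n] [DecidableEq m]
    (A : Matrix m n ℝ) : ℕ → ℝ := fun i =>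
  if h : i < Fintype.card m then
    let ev : Fin (Fintype.card m) → ℝ :=
      (Matrix.isHermitian_mul_conjTranspose_self A).eigenvalues ∘ (Fintype.equivFin m).symm
    Real.sqrt ((ev ∘ Tuple.sort ev) ⟨Fintype.card m - 1 - i, by omega⟩)
  else 0

/-- Spectral norm (largest singular value). -/
def specNorm {m n : Type*} [Fintype m] [Fintype n] [DecidableEq m]
    (A : Matrix m n ℝ) : ℝ := singularValues A 0

/-- Square of the Frobenius norm of a matrix. -/
def matFrobSq {m n : Type*} [Fintype m] [Fintype n] (M : Matrix m n ℝ) : ℝ :=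
  ∑ i, ∑ j, (M i j) ^ 2

/-- Frobenius norm of a matrix. -/
def matFrobNorm {m n : Type*} [Fintype m] [Fintype n] (M : Matrix m n ℝ) : ℝ :=
  Real.sqrt (matFrobSq M)

/-- A rectangular "diagonal" matrix with entries `s 0, s 1, …` placed along the diagonal
determined by the chosen enumerations of the index types. -/
def diagMat (m n : Type*) [Fintype m] [Fintype n] (s : ℕ → ℝ) : Matrix m n ℝ :=
  Matrix.of fun a b =>
    if (Fintype.equivFin m a : ℕ) = (Fintype.equivFin n b : ℕ) then s (Fintype.equivFin m a)
    else 0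

/-- `IsSVD M U s V` : `M = U Σ Vᵀ` is a singular value decomposition of `M`, with `U, V`
orthogonal and the singular values `s` nonnegative and arranged in decreasing order. -/
def IsSVD {m n : Type*} [Fintype m] [Fintype n] [DecidableEq m] [DecidableEq n]
    (M : Matrix m n ℝ) (U : Matrix m m ℝ) (s : ℕ → ℝ) (V : Matrix n n ℝ) : Prop :=
  Uᵀ * U = 1 ∧ Vᵀ * V = 1 ∧ Antitone s ∧ (∀ i, 0 ≤ s i) ∧
    (∀ i, min (Fintype.card m) (Fintype.card n) ≤ i → s i = 0) ∧
    M = U * diagMat m n s * Vᵀ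

/-- `B` is the rank-`r` truncated SVD of `M`: it is obtained from an SVD of `M` by
retaining only the `r` largest singular values. -/
def IsSVDTruncation {m n : Type*} [Fintype m] [Fintype n] [DecidableEq m] [DecidableEq n]
    (M : Matrix m n ℝ) (r : ℕ) (B : Matrix m n ℝ) : Prop :=
  ∃ U s V, IsSVD M U s V ∧ B = U * diagMat m n (fun i => if i < r then s i else 0) * Vᵀ

/-- `A` consists of the first `r` left singular vectors of `M` (the columns of the
orthogonal factor `U` of an SVD of `M` corresponding to the `r` largest singular values). -/
def IsTopLeftSingVecs {m n : Type*} [Fintype m] [Fintype n] [DecidableEq m] [DecidableEq n]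
    (M : Matrix m n ℝ) (r : ℕ) (A : Matrix m (Fin r) ℝ) : Prop :=
  ∃ U s V, IsSVD M U s V ∧ ∃ h : r ≤ Fintype.card m,
    ∀ (a : m) (k : Fin r), A a k = U a ((Fintype.equivFin m).symm (Fin.castLE h k))

/-- Column space of a matrix. -/
def colSpace {m n : Type*} [Fintype n] (M : Matrix m n ℝ) : Submodule ℝ (m → ℝ) :=
  LinearMap.range M.mulVecLin

/-- `Xopt` is a best multilinear rank-`r` approximation of `X` in the Frobenius norm. -/
def IsBestRankApprox {d : ℕ} {I : Fin d → ℕ} (X : Tensor d I) (r : Fin d → ℕ)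
    (Xopt : Tensor d I) : Prop :=
  (∀ j, (Tensor.unfold Xopt j).rank ≤ r j) ∧
    ∀ Y : Tensor d I, (∀ j, (Tensor.unfold Y j).rank ≤ r j) →
      Tensor.frobNorm (X - Xopt) ≤ Tensor.frobNorm (X - Y)

/-- `P` is a selection operator: its columns are distinct columns of the identity matrix. -/
def IsSelection {a b : Type*} [DecidableEq a] (P : Matrix a b ℝ) : Prop :=
  ∃ f : b → a, Function.Injective f ∧ ∀ i k, P i k = if i = f k then 1 else 0

section STHOSVD

variable {d : ℕ}

/-- Dimensions of the partially truncated core tensor in the STHOSVD with processing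
order `[0, 1, …, d-1]`: after processing the first `t` modes, mode `k` has dimension
`r k` for `k < t` and `I k` otherwise. -/
def stDims (I r : Fin d → ℕ) (t : ℕ) : Fin d → ℕ := fun k => if (k : ℕ) < t then r k else I k

theorem stDims_lt {I r : Fin d → ℕ} {t : ℕ} {k : Fin d} (h : (k : ℕ) < t) :
    stDims I r t k = r k := if_pos h

theorem stDims_ge {I r : Fin d → ℕ} {t : ℕ} {k : Fin d} (h : ¬ (k : ℕ) < t) :
    stDims I r t k = I k := if_neg h

theorem stDims_self {I r : Fin d → ℕ} (j : Fin d) : stDims I r (j : ℕ) j = I j :=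
  stDims_ge (lt_irrefl _)

/-- The partially truncated core tensor `G^{(t)} = X ×₁ A₁ᵀ ⋯ ×ₜ Aₜᵀ` of the STHOSVD
(processing order `[0, …, d-1]`). -/
def stCore {I r : Fin d → ℕ} (X : Tensor d I)
    (A : ∀ j, Matrix (Fin (I j)) (Fin (r j)) ℝ) (t : ℕ) : Tensor d (stDims I r t) :=
  Tensor.multiMul X fun k =>
    if h : (k : ℕ) < t then
      Matrix.reindex (finCongr (stDims_lt h).symm) (Equiv.refl _) (A k)ᵀ
    else Matrix.reindex (finCongr (stDims_ge h).symm) (Equiv.refl _)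
      (1 : Matrix (Fin (I k)) (Fin (I k)) ℝ)

/-- The `t`-th partial approximation `X̂^{(t)} = G^{(t)} ×₁ A₁ ⋯ ×ₜ Aₜ` of the STHOSVD. -/
def stPartial {I r : Fin d → ℕ} (X : Tensor d I)
    (A : ∀ j, Matrix (Fin (I j)) (Fin (r j)) ℝ) (t : ℕ) : Tensor d I :=
  Tensor.multiMul (stCore X A t) fun k =>
    if h : (k : ℕ) < t then
      Matrix.reindex (Equiv.refl _) (finCongr (stDims_lt h).symm) (A k)
    else Matrix.reindex (Equiv.refl _) (finCongr (stDims_ge h).symm)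
      (1 : Matrix (Fin (I k)) (Fin (I k)) ℝ)

/-- Column index type for the mode-`j` unfolding of a tensor with dimensions `I`. -/
abbrev colIdx (I : Fin d → ℕ) (j : Fin d) : Type := ∀ k : {k : Fin d // k ≠ j}, Fin (I k.1)

end STHOSVD

/-- Measurable space structure on matrices (entrywise). -/
instance matrixMeasurableSpace (m n : Type*) : MeasurableSpace (Matrix m n ℝ) :=
  inferInstanceAs (MeasurableSpace (m → n → ℝ))

/-- The distribution of a standard Gaussian random matrix: independent `N(0,1)` entries. -/
def gaussMat (m n : Type*) [Fintype m] [Fintype n] : Measure (Matrix m n ℝ) :=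
  (Measure.pi fun _ : m => Measure.pi fun _ : n => gaussianReal 0 1 :
    Measure (m → n → ℝ))

end

noncomputable section

/-- The structure-preserving STHOSVD approximation `X̂ = G^{(d)} ×₁ A₁ ⋯ ×_d A_d`, where
the core `G^{(d)} = X ×₁ P₁ᵀ ⋯ ×_d P_dᵀ` is built from the selection operators `P j` and
the (not necessarily orthonormal) factor matrices are `A j`. -/
def spApprox {d : ℕ} {I L : Fin d → ℕ} (X : Tensor d I)
    (P : ∀ j, Matrix (Fin (I j)) (Fin (L j)) ℝ)
    (A : ∀ j, Matrix (Fin (I j)) (Fin (L j)) ℝ) : Tensor d I :=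
  Tensor.multiMul (stCore X P d) fun k =>
    Matrix.reindex (Equiv.refl _) (finCongr (stDims_lt k.isLt).symm) (A k)

end

/-!
Write `Πₖ = Aₖ Aₖᵀ`, an orthogonal projection since `Aₖ` has orthonormal columns; then
`X̂ = X ×₁ Π₁ ⋯ ×_d Π_d`. Truncating the modes one after the other splits the error into
orthogonal pieces, `‖X - X̂‖² = ∑ⱼ ‖X ×_{k<j} Πₖ ×ⱼ (1 - Πⱼ)‖²`. Since the `Aₖ` are isometries,
the `j`-th piece is `‖(1 - Πⱼ) Gⱼ‖²`, where `Gⱼ` is the mode-`j` unfolding of the partial core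
`G^{(j)}` whose leading left singular vectors form `Aⱼ`. By Eckart–Young it is at most
`‖Gⱼ - N‖²`, where `N` is the unfolding of `X̂_opt ×_{k<j} Aₖᵀ` and has rank `≤ rⱼ`; and
`‖Gⱼ - N‖ = ‖(X - X̂_opt) ×_{k<j} Aₖᵀ‖ ≤ ‖X - X̂_opt‖`. Summing the `d` pieces gives the bound.

Eckart–Young is reduced by the SVD to a diagonal matrix `Σ`. If `P` projects onto the column
space of a rank-`r` matrix, column `i` of `Σ` keeps at least the fraction `1 - ‖P eᵢ‖²` of its
squared norm in the error, and the weights `‖P eᵢ‖² ∈ [0, 1]` sum to `trace P ≤ r`; against the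
decreasing `σᵢ²` they can do no better than cancelling the first `r` of them.
-/

open Finset Module

section Projection

variable {m : Type*} [Fintype m]

lemma Submodule.sum_norm_sq_starProjection_single [DecidableEq m]
    (K : Submodule ℝ (EuclideanSpace ℝ m)) :
    ∑ a, ‖K.starProjection (EuclideanSpace.single a 1)‖ ^ 2 = finrank ℝ K := by
  have hproj : LinearMap.IsProj K (K.starProjection : EuclideanSpace ℝ m →ₗ[ℝ] _) :=
    ⟨fun x => K.starProjection_apply_mem x, fun x hx => K.starProjection_eq_self_iff.mpr hx⟩
  rw [← hproj.trace, LinearMap.trace_eq_sum_inner _ (EuclideanSpace.basisFun m ℝ)]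
  refine sum_congr rfl fun a _ => ?_
  have h := K.re_inner_starProjection_eq_normSq (EuclideanSpace.single a 1)
  rw [real_inner_comm]
  simpa using h.symm

lemma Submodule.norm_sq_sub_norm_sq_starProjection_le (K : Submodule ℝ (EuclideanSpace ℝ m))
    (x : EuclideanSpace ℝ m) {v : EuclideanSpace ℝ m} (hv : v ∈ K) :
    ‖x‖ ^ 2 - ‖K.starProjection x‖ ^ 2 ≤ ‖x - v‖ ^ 2 := by
  have hle : ‖Kᗮ.starProjection x‖ ≤ ‖x - v‖ :=
    calc ‖Kᗮ.starProjection x‖ = ‖Kᗮ.starProjection (x - v)‖ := by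
          rw [map_sub, Submodule.starProjection_orthogonal_val v,
            K.starProjection_eq_self_iff.mpr hv, sub_self, sub_zero]
      _ ≤ ‖x - v‖ := Kᗮ.norm_starProjection_apply_le _
  nlinarith [K.norm_sq_eq_add_norm_sq_starProjection x, norm_nonneg (Kᗮ.starProjection x)]

end Projection

lemma sum_range_tail_le_sum_one_sub_mul {c q : ℕ → ℝ} {L R : ℕ} (hc : Antitone c)
    (hcR : 0 ≤ c R) (hq0 : ∀ i, 0 ≤ q i) (hq1 : ∀ i, q i ≤ 1)
    (hq : ∑ i ∈ range L, q i ≤ R) :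
    ∑ i ∈ range L, (if i < R then 0 else c i) ≤ ∑ i ∈ range L, (1 - q i) * c i := by
  have hterm : ∀ i, (if i < R then 0 else c i) - (1 - q i) * c i
      ≤ (q i - if i < R then 1 else 0) * c R := by
    intro i
    split_ifs with h
    · nlinarith [hc h.le, hq1 i]
    · nlinarith [hc (not_lt.mp h), hq0 i]
  have hcount : ∑ i ∈ range L, (if i < R then (1 : ℝ) else 0) = min L R := by
    rw [sum_boole, show (range L).filter (· < R) = range (min L R) by ext; simp]
    simp
  have hmass : ∑ i ∈ range L, q i ≤ min L R := by
    have : ∑ i ∈ range L, q i ≤ L := by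
      simpa using sum_le_sum fun i (_ : i ∈ range L) => hq1 i
    rw [Nat.cast_min]
    exact le_min this hq
  have := sum_le_sum fun i (_ : i ∈ range L) => hterm i
  rw [sum_sub_distrib, ← sum_mul, sum_sub_distrib, hcount] at this
  nlinarith

lemma sum_range_ite_lt (f : ℕ → ℝ) (a b : ℕ) :
    ∑ i ∈ range a, (if i < b then f i else 0) = ∑ i ∈ range (min a b), f i := by
  rw [← sum_filter]
  congr 1
  ext
  simp

lemma Fintype.sum_comp_equivFin (n : Type*) [Fintype n] (g : ℕ → ℝ) :
    ∑ b : n, g (Fintype.equivFin n b) = ∑ i ∈ range (Fintype.card n), g i := by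
  rw [← (Fintype.equivFin n).symm.sum_comp]
  simp [Fin.sum_univ_eq_sum_range g]

lemma Fin.sum_ite_val_eq {r : ℕ} (x : ℕ) (f : ℕ → ℝ) :
    ∑ k : Fin r, (if (k : ℕ) = x then f k else 0) = if x < r then f x else 0 := by
  rw [Fin.sum_univ_eq_sum_range (fun i => if i = x then f i else 0), sum_ite_eq']
  simp

lemma Matrix.mul_transpose_transpose_mul_self {m k : Type*} [Fintype m] [Fintype k]
    [DecidableEq k] {A : Matrix m k ℝ} (hA : Aᵀ * A = 1) : (A * Aᵀ)ᵀ * (A * Aᵀ) = A * Aᵀ := by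
  rw [Matrix.transpose_mul, Matrix.transpose_transpose, Matrix.mul_assoc, ← Matrix.mul_assoc Aᵀ,
    hA, Matrix.one_mul]

lemma Matrix.reindex_mul_reindex {l m n l' m' n' : Type*} [Fintype m] [Fintype m'] (e₁ : l ≃ l')
    (e₂ : m ≃ m') (e₃ : n ≃ n') (M : Matrix l m ℝ) (N : Matrix m n ℝ) :
    Matrix.reindex e₁ e₂ M * Matrix.reindex e₂ e₃ N = Matrix.reindex e₁ e₃ (M * N) := by
  simp only [Matrix.reindex_apply, Matrix.submatrix_mul_equiv]

section Frobenius

variable {m n : Type*} [Fintype m] [Fintype n]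

lemma matFrobSq_eq_trace (M : Matrix m n ℝ) : matFrobSq M = (Mᵀ * M).trace := by
  simp only [matFrobSq, Matrix.trace, Matrix.diag_apply, Matrix.mul_apply, Matrix.transpose_apply]
  rw [sum_comm]
  simp [sq]

lemma matFrobSq_eq_sum_norm_sq_col (M : Matrix m n ℝ) :
    matFrobSq M = ∑ b, ‖WithLp.toLp 2 (Mᵀ b)‖ ^ 2 := by
  rw [matFrobSq, sum_comm]
  simp [EuclideanSpace.norm_sq_eq]

lemma matFrobSq_reindex {m' n' : Type*} [Fintype m'] [Fintype n']
    (e : m ≃ m') (f : n ≃ n') (M : Matrix m n ℝ) :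
    matFrobSq (Matrix.reindex e f M) = matFrobSq M := by
  simp only [matFrobSq, Matrix.reindex_apply, Matrix.submatrix_apply]
  rw [← e.sum_comp]
  exact Finset.sum_congr rfl fun a _ => by rw [← f.sum_comp]; simp

lemma matFrobSq_mul_of_transpose_mul_self {m' : Type*} [Fintype m'] [DecidableEq m]
    {U : Matrix m' m ℝ} (hU : Uᵀ * U = 1) (B : Matrix m n ℝ) :
    matFrobSq (U * B) = matFrobSq B := by
  rw [matFrobSq_eq_trace, matFrobSq_eq_trace, Matrix.transpose_mul, Matrix.mul_assoc,
    ← Matrix.mul_assoc Uᵀ, hU, Matrix.one_mul]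

lemma matFrobSq_mul_transpose_of_transpose_mul_self {n' : Type*} [Fintype n'] [DecidableEq n]
    {V : Matrix n' n ℝ} (hV : Vᵀ * V = 1) (B : Matrix m n ℝ) :
    matFrobSq (B * Vᵀ) = matFrobSq B := by
  rw [matFrobSq_eq_trace, matFrobSq_eq_trace, Matrix.transpose_mul, Matrix.transpose_transpose,
    Matrix.mul_assoc, Matrix.trace_mul_comm, Matrix.mul_assoc, Matrix.mul_assoc, hV,
    Matrix.mul_one]

end Frobenius

section LowRank

variable (m : Type*) {n : Type*} [Fintype m] [Fintype n] [DecidableEq m]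

noncomputable def stdVec (i : ℕ) : EuclideanSpace ℝ m :=
  if h : i < Fintype.card m then EuclideanSpace.single ((Fintype.equivFin m).symm ⟨i, h⟩) 1
  else 0

variable {m}

lemma stdVec_equivFin (a : m) : stdVec m (Fintype.equivFin m a) = EuclideanSpace.single a 1 := by
  simp [stdVec]

lemma norm_sq_stdVec (i : ℕ) : ‖stdVec m i‖ ^ 2 = if i < Fintype.card m then 1 else 0 := by
  unfold stdVec
  split_ifs <;> simp

lemma diagMat_col (s : ℕ → ℝ) (b : n) :
    WithLp.toLp 2 ((diagMat m n s)ᵀ b)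
      = s (Fintype.equivFin n b) • stdVec m (Fintype.equivFin n b) := by
  ext a
  simp only [stdVec, diagMat]
  split_ifs with h
  · simp only [Matrix.transpose_apply, Matrix.of_apply, WithLp.ofLp_smul, Pi.smul_apply,
      PiLp.single_apply, Equiv.eq_symm_apply, Fin.ext_iff, smul_eq_mul, mul_ite, mul_one, mul_zero]
    split_ifs with ha <;> simp [ha]
  · have : ((Fintype.equivFin m) a : ℕ) ≠ Fintype.equivFin n b := fun ha => h (ha ▸ Fin.isLt _)
    simp [this]

lemma norm_sq_diagMat_col (s : ℕ → ℝ) (b : n) :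
    ‖WithLp.toLp 2 ((diagMat m n s)ᵀ b)‖ ^ 2
      = if (Fintype.equivFin n b : ℕ) < Fintype.card m then s (Fintype.equivFin n b) ^ 2
        else 0 := by
  rw [diagMat_col, norm_smul, mul_pow, norm_sq_stdVec, Real.norm_eq_abs, sq_abs]
  simp

lemma matFrobSq_diagMat (s : ℕ → ℝ) :
    matFrobSq (diagMat m n s) = ∑ i ∈ range (min (Fintype.card m) (Fintype.card n)), s i ^ 2 := by
  rw [matFrobSq_eq_sum_norm_sq_col]
  simp_rw [norm_sq_diagMat_col]
  rw [Fintype.sum_comp_equivFin n (fun i => if i < Fintype.card m then s i ^ 2 else 0),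
    sum_range_ite_lt, min_comm]

lemma norm_sq_starProjection_stdVec_le_one (K : Submodule ℝ (EuclideanSpace ℝ m)) (i : ℕ) :
    ‖K.starProjection (stdVec m i)‖ ^ 2 ≤ 1 := by
  have h : ‖stdVec m i‖ ≤ 1 := by
    rw [← sq_le_one_iff₀ (norm_nonneg _), norm_sq_stdVec]
    split_ifs <;> norm_num
  exact pow_le_one₀ (norm_nonneg _) ((K.norm_starProjection_apply_le _).trans h)

lemma sum_range_norm_sq_starProjection_stdVec (K : Submodule ℝ (EuclideanSpace ℝ m)) :
    ∑ i ∈ range (Fintype.card m), ‖K.starProjection (stdVec m i)‖ ^ 2 = finrank ℝ K := by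
  rw [← Fintype.sum_comp_equivFin m fun i => ‖K.starProjection (stdVec m i)‖ ^ 2]
  simp only [stdVec_equivFin]
  exact K.sum_norm_sq_starProjection_single

lemma norm_sq_diagMat_col_sub_ge (K : Submodule ℝ (EuclideanSpace ℝ m)) (s : ℕ → ℝ) (b : n)
    {v : EuclideanSpace ℝ m} (hv : v ∈ K) :
    (if (Fintype.equivFin n b : ℕ) < Fintype.card m then
        (1 - ‖K.starProjection (stdVec m (Fintype.equivFin n b))‖ ^ 2)
          * s (Fintype.equivFin n b) ^ 2 else 0)
      ≤ ‖WithLp.toLp 2 ((diagMat m n s)ᵀ b) - v‖ ^ 2 := by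
  have h := K.norm_sq_sub_norm_sq_starProjection_le (WithLp.toLp 2 ((diagMat m n s)ᵀ b)) hv
  rw [norm_sq_diagMat_col, diagMat_col, map_smul, norm_smul, mul_pow, Real.norm_eq_abs,
    sq_abs] at h
  rw [diagMat_col]
  split_ifs at h ⊢
  · linarith
  · exact sq_nonneg _

variable [DecidableEq n]

lemma sum_tail_sq_le_matFrobSq_diagMat_sub {s : ℕ → ℝ} (hs : Antitone s) (hs0 : ∀ i, 0 ≤ s i)
    {r : ℕ} {N : Matrix m n ℝ} (hN : N.rank ≤ r) :
    ∑ i ∈ range (min (Fintype.card m) (Fintype.card n)), (if i < r then 0 else s i ^ 2)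
      ≤ matFrobSq (diagMat m n s - N) := by
  set K := LinearMap.range (Matrix.toEuclideanLin N)
  set q : ℕ → ℝ := fun i => ‖K.starProjection (stdVec m i)‖ ^ 2
  have hK : finrank ℝ K = N.rank := (N.rank_eq_finrank_range_toLin
    (EuclideanSpace.basisFun m ℝ).toBasis (EuclideanSpace.basisFun n ℝ).toBasis).symm
  have hmass : ∑ i ∈ range (min (Fintype.card m) (Fintype.card n)), q i ≤ r :=
    calc _ ≤ ∑ i ∈ range (Fintype.card m), q i :=
          sum_le_sum_of_subset_of_nonneg (range_subset_range.mpr (min_le_left _ _))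
            fun i _ _ => sq_nonneg _
      _ ≤ r := by
          rw [sum_range_norm_sq_starProjection_stdVec, hK]
          exact_mod_cast hN
  have hcol (b : n) : WithLp.toLp 2 (Nᵀ b) ∈ K :=
    ⟨EuclideanSpace.single b 1, by ext a; simp [Matrix.toLpLin_apply]⟩
  calc _ ≤ ∑ i ∈ range (min (Fintype.card m) (Fintype.card n)), (1 - q i) * s i ^ 2 :=
        sum_range_tail_le_sum_one_sub_mul (fun i j hij => pow_le_pow_left₀ (hs0 j) (hs hij) 2)
          (sq_nonneg _) (fun i => sq_nonneg _) (norm_sq_starProjection_stdVec_le_one K) hmass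
    _ = ∑ b, (if (Fintype.equivFin n b : ℕ) < Fintype.card m then
          (1 - q (Fintype.equivFin n b)) * s (Fintype.equivFin n b) ^ 2 else 0) := by
        rw [Fintype.sum_comp_equivFin n
            fun i => if i < Fintype.card m then (1 - q i) * s i ^ 2 else 0,
          sum_range_ite_lt, min_comm]
    _ ≤ ∑ b, ‖WithLp.toLp 2 ((diagMat m n s)ᵀ b) - WithLp.toLp 2 (Nᵀ b)‖ ^ 2 :=
        sum_le_sum fun b _ => norm_sq_diagMat_col_sub_ge K s b (hcol b)
    _ = matFrobSq (diagMat m n s - N) := (matFrobSq_eq_sum_norm_sq_col _).symm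

end LowRank

section TopSelection

variable {m : Type*} [Fintype m]

lemma eq_equivFin_symm_castLE_iff {r : ℕ} (hr : r ≤ Fintype.card m) (k : Fin r) (c : m) :
    c = (Fintype.equivFin m).symm (Fin.castLE hr k) ↔ (k : ℕ) = Fintype.equivFin m c := by
  simp [Equiv.eq_symm_apply, Fin.ext_iff, eq_comm]

variable [DecidableEq m]

lemma diagMat_sub_diagonal_mul (n : Type*) [Fintype n] (s : ℕ → ℝ) (r : ℕ) :
    diagMat m n s - Matrix.diagonal (fun c => if (Fintype.equivFin m c : ℕ) < r then (1 : ℝ) else 0)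
        * diagMat m n s
      = diagMat m n (fun i => if i < r then 0 else s i) := by
  ext a b
  simp only [Matrix.sub_apply, Matrix.diagonal_mul, diagMat, Matrix.of_apply]
  split_ifs <;> simp_all

noncomputable def topSelection {r : ℕ} (hr : r ≤ Fintype.card m) : Matrix m (Fin r) ℝ :=
  (1 : Matrix m m ℝ).submatrix id fun k => (Fintype.equivFin m).symm (Fin.castLE hr k)

lemma topSelection_transpose_mul_self {r : ℕ} (hr : r ≤ Fintype.card m) :
    (topSelection hr)ᵀ * topSelection hr = 1 := by
  ext k k'
  simp [topSelection, Matrix.mul_apply, Matrix.one_apply, Fin.ext_iff]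

lemma topSelection_mul_transpose {r : ℕ} (hr : r ≤ Fintype.card m) :
    topSelection hr * (topSelection hr)ᵀ
      = Matrix.diagonal fun c => if (Fintype.equivFin m c : ℕ) < r then 1 else 0 := by
  ext c c'
  simp only [topSelection, Matrix.mul_apply, Matrix.submatrix_apply, Matrix.transpose_apply,
    Matrix.one_apply, id, Matrix.diagonal_apply, eq_equivFin_symm_castLE_iff, ite_mul, one_mul,
    zero_mul]
  rw [Fin.sum_ite_val_eq (f := fun k => if k = (Fintype.equivFin m c' : ℕ) then (1 : ℝ) else 0)]
  simp only [Fin.val_inj, EmbeddingLike.apply_eq_iff_eq]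
  split_ifs <;> simp_all

lemma mul_topSelection_apply {m' : Type*} {r : ℕ} (hr : r ≤ Fintype.card m) (U : Matrix m' m ℝ)
    (a : m') (k : Fin r) :
    (U * topSelection hr) a k = U a ((Fintype.equivFin m).symm (Fin.castLE hr k)) := by
  simp [topSelection, Matrix.mul_apply, Matrix.one_apply]

end TopSelection

namespace IsTopLeftSingVecs

variable {m n : Type*} [Fintype m] [Fintype n] [DecidableEq m] [DecidableEq n]
  {M : Matrix m n ℝ} {r : ℕ} {A : Matrix m (Fin r) ℝ}

lemma transpose_mul_self (hA : IsTopLeftSingVecs M r A) : Aᵀ * A = 1 := by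
  obtain ⟨U, s, V, ⟨hU, -⟩, hr, hAU⟩ := hA
  have hAsel : A = U * topSelection hr := by ext a k; rw [hAU, mul_topSelection_apply]
  rw [hAsel, Matrix.transpose_mul, Matrix.mul_assoc, ← Matrix.mul_assoc Uᵀ, hU, Matrix.one_mul,
    topSelection_transpose_mul_self]

lemma matFrobSq_sub_le (hA : IsTopLeftSingVecs M r A) {N : Matrix m n ℝ} (hN : N.rank ≤ r) :
    matFrobSq (M - A * Aᵀ * M) ≤ matFrobSq (M - N) := by
  obtain ⟨U, s, V, ⟨hU, hV, hs, hs0, -, hM⟩, hr, hAU⟩ := hA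
  have hAsel : A = U * topSelection hr := by ext a k; rw [hAU, mul_topSelection_apply]
  have hres : M - A * Aᵀ * M = U * diagMat m n (fun i => if i < r then 0 else s i) * Vᵀ := by
    rw [← diagMat_sub_diagonal_mul n, ← topSelection_mul_transpose hr, hM, hAsel]
    simp only [Matrix.transpose_mul, Matrix.mul_sub, Matrix.sub_mul, Matrix.mul_assoc]
    rw [← Matrix.mul_assoc Uᵀ U, hU, Matrix.one_mul]
  have hdiff : M - N = U * (diagMat m n s - Uᵀ * N * V) * Vᵀ := by
    rw [Matrix.mul_sub, Matrix.sub_mul, ← hM, ← Matrix.mul_assoc, ← Matrix.mul_assoc,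
      mul_eq_one_comm.mp hU, Matrix.one_mul, Matrix.mul_assoc, mul_eq_one_comm.mp hV,
      Matrix.mul_one]
  have hrank : (Uᵀ * N * V).rank ≤ r :=
    ((Matrix.rank_mul_le_left _ _).trans (Matrix.rank_mul_le_right _ _)).trans hN
  calc matFrobSq (M - A * Aᵀ * M)
      = ∑ i ∈ range (min (Fintype.card m) (Fintype.card n)), (if i < r then 0 else s i ^ 2) := by
        rw [hres, matFrobSq_mul_transpose_of_transpose_mul_self hV,
          matFrobSq_mul_of_transpose_mul_self hU, matFrobSq_diagMat]
        refine sum_congr rfl fun i _ => ?_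
        split_ifs <;> simp
    _ ≤ matFrobSq (diagMat m n s - Uᵀ * N * V) := sum_tail_sq_le_matFrobSq_diagMat_sub hs hs0 hrank
    _ = matFrobSq (M - N) := by
        rw [hdiff, matFrobSq_mul_transpose_of_transpose_mul_self hV,
          matFrobSq_mul_of_transpose_mul_self hU]

end IsTopLeftSingVecs

namespace Tensor

variable {d : ℕ} {I J K : Fin d → ℕ}

lemma frobSq_eq_dotProduct (T : Tensor d I) : frobSq T = T ⬝ᵥ T := by
  simp [frobSq, dotProduct, sq]

lemma frobSq_nonneg (T : Tensor d I) : 0 ≤ frobSq T :=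
  Finset.sum_nonneg fun _ _ => sq_nonneg _

lemma frobSq_add (T S : Tensor d I) : frobSq (T + S) = frobSq T + frobSq S + 2 * (T ⬝ᵥ S) := by
  simp only [frobSq_eq_dotProduct, add_dotProduct, dotProduct_add, dotProduct_comm S T]
  ring

lemma frobSq_sub (T S : Tensor d I) : frobSq (T - S) = frobSq T + frobSq S - 2 * (T ⬝ᵥ S) := by
  simp only [frobSq_eq_dotProduct, sub_dotProduct, dotProduct_sub, dotProduct_comm S T]
  ring

lemma dotProduct_multiMul (X Y : Tensor d J) (M N : ∀ j, Matrix (Fin (I j)) (Fin (J j)) ℝ) :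
    multiMul X M ⬝ᵥ multiMul Y N = X ⬝ᵥ multiMul Y fun j => (M j)ᵀ * N j := by
  have hprod : ∀ a b : ∀ j, Fin (J j),
      ∑ i : ∀ j, Fin (I j), (∏ j, M j (i j) (a j)) * ∏ j, N j (i j) (b j)
        = ∏ j, ((M j)ᵀ * N j) (a j) (b j) := fun a b => by
    simp only [← Finset.prod_mul_distrib, Fintype.prod_sum, Matrix.mul_apply,
      Matrix.transpose_apply]
  simp only [dotProduct, multiMul]
  calc _ = ∑ a, ∑ b, (∑ i : ∀ j, Fin (I j), (∏ j, M j (i j) (a j)) * ∏ j, N j (i j) (b j))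
        * (X a * Y b) := by
        simp_rw [Finset.sum_mul_sum, Finset.sum_mul]
        rw [Finset.sum_comm]
        refine Finset.sum_congr rfl fun a _ => ?_
        rw [Finset.sum_comm]
        exact Finset.sum_congr rfl fun b _ => Finset.sum_congr rfl fun i _ => by ring
    _ = _ := by
        simp_rw [hprod, Finset.mul_sum]
        exact Finset.sum_congr rfl fun a _ => Finset.sum_congr rfl fun b _ => by ring

lemma multiMul_multiMul (X : Tensor d J) (C : ∀ j, Matrix (Fin (K j)) (Fin (J j)) ℝ)
    (B : ∀ j, Matrix (Fin (I j)) (Fin (K j)) ℝ) :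
    multiMul (multiMul X C) B = multiMul X fun j => B j * C j := by
  funext i
  simp only [multiMul, Matrix.mul_apply, Finset.mul_sum]
  rw [Finset.sum_comm]
  refine Finset.sum_congr rfl fun c _ => ?_
  simp only [← mul_assoc, ← Finset.sum_mul, Fintype.prod_sum, Finset.prod_mul_distrib]

lemma multiMul_one (X : Tensor d I) :
    multiMul X (fun j => (1 : Matrix (Fin (I j)) (Fin (I j)) ℝ)) = X := by
  funext i
  have hdelta : ∀ k : ∀ j, Fin (I j),
      ∏ j, (1 : Matrix (Fin (I j)) (Fin (I j)) ℝ) (i j) (k j) = if i = k then 1 else 0 := by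
    intro k
    simp only [Matrix.one_apply, Finset.prod_boole, Finset.mem_univ, true_implies, funext_iff]
  simp [multiMul, hdelta]

lemma multiMul_update_add (X : Tensor d J) (M : ∀ j, Matrix (Fin (I j)) (Fin (J j)) ℝ)
    (j : Fin d) (P Q : Matrix (Fin (I j)) (Fin (J j)) ℝ) :
    multiMul X (Function.update M j (P + Q))
      = multiMul X (Function.update M j P) + multiMul X (Function.update M j Q) := by
  funext i
  simp only [multiMul, Pi.add_apply, ← Finset.sum_add_distrib, ← add_mul]
  refine Finset.sum_congr rfl fun k _ => ?_
  simp only [Fintype.prod_eq_mul_prod_subtype_ne _ j, Function.update_self, Matrix.add_apply,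
    add_mul]
  congr 3 <;> exact Finset.prod_congr rfl fun l _ => by simp [Function.update_of_ne l.2]

lemma multiMul_eq_zero_of_eq_zero (X : Tensor d J) {M : ∀ j, Matrix (Fin (I j)) (Fin (J j)) ℝ}
    {j : Fin d} (hj : M j = 0) : multiMul X M = 0 := by
  funext i
  refine Finset.sum_eq_zero fun k _ => ?_
  rw [Finset.prod_eq_zero (Finset.mem_univ j) (by rw [hj]; rfl), zero_mul]

lemma frobSq_multiMul_of_transpose_mul_self (X : Tensor d J)
    {M : ∀ j, Matrix (Fin (I j)) (Fin (J j)) ℝ} (hM : ∀ j, (M j)ᵀ * M j = 1) :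
    frobSq (multiMul X M) = frobSq X := by
  rw [frobSq_eq_dotProduct, frobSq_eq_dotProduct, dotProduct_multiMul]
  simp only [hM, multiMul_one]

lemma frobSq_sub_multiMul_of_projection (X : Tensor d I)
    {P : ∀ k, Matrix (Fin (I k)) (Fin (I k)) ℝ} (hP : ∀ k, (P k)ᵀ * P k = P k) :
    frobSq (X - multiMul X P) = frobSq X - frobSq (multiMul X P) := by
  have h : multiMul X P ⬝ᵥ multiMul X P = X ⬝ᵥ multiMul X P := by
    rw [dotProduct_multiMul]
    simp only [hP]
  rw [frobSq_sub, frobSq_eq_dotProduct (multiMul X P), h]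
  ring

lemma unfold_apply (X : Tensor d I) (j : Fin d) (a : Fin (I j)) (b : colIdx I j) :
    unfold X j a b = X ((Equiv.piSplitAt j fun k => Fin (I k)).symm (a, b)) := by
  simp only [unfold, Matrix.of_apply]
  congr 1
  funext k
  by_cases h : k = j
  · subst h; simp
  · simp [h]

lemma frobSq_eq_matFrobSq_unfold (X : Tensor d I) (j : Fin d) :
    frobSq X = matFrobSq (unfold X j) := by
  rw [frobSq, ← (Equiv.piSplitAt j fun k => Fin (I k)).symm.sum_comp, Fintype.sum_prod_type]
  simp [matFrobSq, unfold_apply]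

lemma unfold_sub (X Y : Tensor d I) (j : Fin d) : unfold (X - Y) j = unfold X j - unfold Y j :=
  rfl

def kronExcept (C : ∀ k, Matrix (Fin (K k)) (Fin (J k)) ℝ) (j : Fin d) :
    Matrix (colIdx K j) (colIdx J j) ℝ :=
  Matrix.of fun b c => ∏ k : {k // k ≠ j}, C k (b k) (c k)

lemma unfold_multiMul (T : Tensor d J) (C : ∀ k, Matrix (Fin (K k)) (Fin (J k)) ℝ) (j : Fin d) :
    unfold (multiMul T C) j = C j * unfold T j * (kronExcept C j)ᵀ := by
  ext a b
  rw [unfold_apply, multiMul, ← (Equiv.piSplitAt j fun k => Fin (J k)).symm.sum_comp,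
    Fintype.sum_prod_type, Finset.sum_comm]
  simp only [Matrix.mul_apply, Matrix.transpose_apply, kronExcept, Matrix.of_apply, unfold_apply,
    Finset.sum_mul, Fintype.prod_eq_mul_prod_subtype_ne _ j]
  refine Finset.sum_congr rfl fun c _ => Finset.sum_congr rfl fun a' _ => ?_
  simp only [Equiv.piSplitAt_symm_apply, dite_true, mul_assoc]
  rw [mul_comm (T _)]
  congr 2
  exact Finset.prod_congr rfl fun k _ => by rw [dif_neg k.2, dif_neg k.2]

lemma kronExcept_congr {C C' : ∀ k, Matrix (Fin (K k)) (Fin (J k)) ℝ} {j : Fin d}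
    (h : ∀ k, k ≠ j → C k = C' k) : kronExcept C j = kronExcept C' j := by
  ext b c
  simp only [kronExcept, Matrix.of_apply]
  exact Finset.prod_congr rfl fun k _ => by rw [h k k.2]

lemma kronExcept_mul (L : ∀ k, Matrix (Fin (I k)) (Fin (K k)) ℝ)
    (C : ∀ k, Matrix (Fin (K k)) (Fin (J k)) ℝ) (j : Fin d) :
    kronExcept (fun k => L k * C k) j = kronExcept L j * kronExcept C j := by
  ext b c
  simp only [kronExcept, Matrix.of_apply, Matrix.mul_apply, Fintype.prod_sum,
    Finset.prod_mul_distrib]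

lemma kronExcept_one (j : Fin d) :
    kronExcept (fun k => (1 : Matrix (Fin (J k)) (Fin (J k)) ℝ)) j = 1 := by
  ext b c
  simp only [kronExcept, Matrix.of_apply, Matrix.one_apply, Finset.prod_boole, Finset.mem_univ,
    true_implies, funext_iff]

lemma kronExcept_transpose_mul_self {C : ∀ k, Matrix (Fin (K k)) (Fin (J k)) ℝ}
    (hC : ∀ k, (C k)ᵀ * C k = 1) (j : Fin d) : (kronExcept C j)ᵀ * kronExcept C j = 1 := by
  rw [show (kronExcept C j)ᵀ = kronExcept (fun k => (C k)ᵀ) j from rfl, ← kronExcept_mul]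
  simp only [hC, kronExcept_one]

end Tensor

section STHOSVD

open Tensor

variable {d : ℕ} {I r : Fin d → ℕ} (A : ∀ j, Matrix (Fin (I j)) (Fin (r j)) ℝ)

noncomputable def coreFactor (t : ℕ) : ∀ k, Matrix (Fin (stDims I r t k)) (Fin (I k)) ℝ := fun k =>
  if h : (k : ℕ) < t then Matrix.reindex (finCongr (stDims_lt h).symm) (Equiv.refl _) (A k)ᵀ
  else Matrix.reindex (finCongr (stDims_ge h).symm) (Equiv.refl _)
    (1 : Matrix (Fin (I k)) (Fin (I k)) ℝ)

noncomputable def liftFactor (t : ℕ) : ∀ k, Matrix (Fin (I k)) (Fin (stDims I r t k)) ℝ := fun k =>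
  if h : (k : ℕ) < t then Matrix.reindex (Equiv.refl _) (finCongr (stDims_lt h).symm) (A k)
  else Matrix.reindex (Equiv.refl _) (finCongr (stDims_ge h).symm)
    (1 : Matrix (Fin (I k)) (Fin (I k)) ℝ)

noncomputable def projFirst (t : ℕ) : ∀ k, Matrix (Fin (I k)) (Fin (I k)) ℝ := fun k =>
  if (k : ℕ) < t then A k * (A k)ᵀ else 1

noncomputable def residualFactor (j : Fin d) : ∀ k, Matrix (Fin (I k)) (Fin (I k)) ℝ :=
  Function.update (projFirst A j) j (1 - A j * (A j)ᵀ)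

lemma stCore_eq_multiMul (X : Tensor d I) (t : ℕ) : stCore X A t = multiMul X (coreFactor A t) :=
  rfl

lemma liftFactor_mul_coreFactor (t : ℕ) (k : Fin d) :
    liftFactor A t k * coreFactor A t k = projFirst A t k := by
  unfold liftFactor coreFactor projFirst
  split_ifs <;> simp

variable {A}

lemma liftFactor_transpose_mul_self (hA : ∀ j, (A j)ᵀ * A j = 1) (t : ℕ) (k : Fin d) :
    (liftFactor A t k)ᵀ * liftFactor A t k = 1 := by
  unfold liftFactor
  split_ifs
  · rw [Matrix.transpose_reindex, Matrix.reindex_mul_reindex, hA]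
    simp
  · rw [Matrix.transpose_reindex, Matrix.reindex_mul_reindex, Matrix.transpose_one, Matrix.one_mul]
    simp

lemma projFirst_transpose_mul_self (hA : ∀ j, (A j)ᵀ * A j = 1) (t : ℕ) (k : Fin d) :
    (projFirst A t k)ᵀ * projFirst A t k = projFirst A t k := by
  unfold projFirst
  split_ifs
  · exact Matrix.mul_transpose_transpose_mul_self (hA k)
  · simp

variable (A)

lemma stPartial_eq_multiMul (X : Tensor d I) (t : ℕ) :
    stPartial X A t = multiMul X (projFirst A t) := by
  change multiMul (multiMul X (coreFactor A t)) (liftFactor A t) = _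
  rw [multiMul_multiMul]
  exact congrArg _ (funext (liftFactor_mul_coreFactor A t))

lemma projFirst_zero : projFirst A 0 = fun _ => 1 := by
  funext k
  simp [projFirst]

lemma projFirst_self (j : Fin d) : projFirst A j j = 1 := by
  simp [projFirst]

lemma projFirst_succ (j : Fin d) :
    projFirst A (j + 1) = Function.update (projFirst A j) j (A j * (A j)ᵀ) := by
  funext k
  by_cases hk : k = j
  · subst hk
    simp [projFirst]
  · have : ((k : ℕ) < j + 1) ↔ ((k : ℕ) < j) := by
      have := Fin.val_ne_iff.mpr hk
      omega
    simp [projFirst, Function.update_of_ne hk, this]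

variable {A}

lemma frobSq_multiMul_projFirst_eq_add (hA : ∀ j, (A j)ᵀ * A j = 1) (Y : Tensor d I)
    (j : Fin d) :
    frobSq (multiMul Y (projFirst A j))
      = frobSq (multiMul Y (projFirst A (j + 1))) + frobSq (multiMul Y (residualFactor A j)) := by
  have hsplit : multiMul Y (projFirst A j)
      = multiMul Y (projFirst A (j + 1)) + multiMul Y (residualFactor A j) := by
    rw [projFirst_succ, residualFactor, ← multiMul_update_add, add_sub_cancel,
      ← projFirst_self A j, Function.update_eq_self]
  have horth : multiMul Y (projFirst A (j + 1)) ⬝ᵥ multiMul Y (residualFactor A j) = 0 := by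
    rw [dotProduct_multiMul, multiMul_eq_zero_of_eq_zero (j := j), dotProduct_zero]
    simp only [projFirst_succ, residualFactor, Function.update_self]
    rw [Matrix.mul_sub, Matrix.mul_one, Matrix.mul_transpose_transpose_mul_self (hA j),
      Matrix.transpose_mul, Matrix.transpose_transpose, sub_self]
  rw [hsplit, frobSq_add, horth]
  ring

lemma frobSq_sub_frobSq_multiMul_projFirst (hA : ∀ j, (A j)ᵀ * A j = 1) (X : Tensor d I) :
    frobSq X - frobSq (multiMul X (projFirst A d))
      = ∑ j : Fin d, frobSq (multiMul X (residualFactor A j)) := by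
  set f : ℕ → ℝ := fun t => frobSq (multiMul X (projFirst A t))
  have hstep : ∀ j : Fin d, frobSq (multiMul X (residualFactor A j)) = f j - f (j + 1) :=
    fun j => by simp only [f, frobSq_multiMul_projFirst_eq_add hA X j]; ring
  rw [Finset.sum_congr rfl fun j _ => hstep j, Fin.sum_univ_eq_sum_range (fun i => f i - f (i + 1)),
    Finset.sum_range_sub']
  simp [f, projFirst_zero, multiMul_one]

lemma frobSq_multiMul_projFirst_le (hA : ∀ j, (A j)ᵀ * A j = 1) (Y : Tensor d I) (t : ℕ) :
    frobSq (multiMul Y (projFirst A t)) ≤ frobSq Y := by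
  induction t with
  | zero => rw [projFirst_zero, multiMul_one]
  | succ t ih =>
    by_cases ht : t < d
    · have := frobSq_multiMul_projFirst_eq_add hA Y ⟨t, ht⟩
      linarith [frobSq_nonneg (multiMul Y (residualFactor A ⟨t, ht⟩))]
    · have hfactor : projFirst A (t + 1) = projFirst A t := by
        funext k
        have : (k : ℕ) < t := by omega
        simp [projFirst, this, Nat.lt_succ_of_lt this]
      rwa [hfactor]

lemma reindex_unfold_stCore (Y : Tensor d I) (j : Fin d) :
    Matrix.reindex (finCongr (stDims_self j)) (Equiv.refl _) (unfold (stCore Y A j) j)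
      = unfold Y j * (kronExcept (coreFactor A j) j)ᵀ := by
  have hrow : Matrix.reindex (finCongr (stDims_self j)) (Equiv.refl _) (coreFactor A j j) = 1 := by
    ext a a'
    simp [coreFactor, Matrix.one_apply, Fin.ext_iff]
  rw [stCore_eq_multiMul, unfold_multiMul, Matrix.mul_assoc,
    ← Matrix.reindex_mul_reindex _ (Equiv.refl _) (Equiv.refl _), hrow, Matrix.one_mul,
    Matrix.reindex_refl_refl]

lemma frobSq_multiMul_residualFactor_le (hA : ∀ j, (A j)ᵀ * A j = 1) {X Xopt : Tensor d I}
    {j : Fin d}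
    (hAj : IsTopLeftSingVecs
      (Matrix.reindex (finCongr (stDims_self j)) (Equiv.refl _) (unfold (stCore X A j) j))
      (r j) (A j))
    (hrank : (unfold Xopt j).rank ≤ r j) :
    frobSq (multiMul X (residualFactor A j)) ≤ frobSq (X - Xopt) := by
  set M := Matrix.reindex (finCongr (stDims_self j)) (Equiv.refl _) (unfold (stCore X A j) j)
  set Q := kronExcept (coreFactor A j) j
  have hM : M = unfold X j * Qᵀ := reindex_unfold_stCore X j
  have hres : unfold (multiMul X (residualFactor A j)) j
      = (M - A j * (A j)ᵀ * M) * (kronExcept (liftFactor A j) j)ᵀ := by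
    have hoff : ∀ k, k ≠ j → residualFactor A j k = liftFactor A j k * coreFactor A j k :=
      fun k hk => by rw [liftFactor_mul_coreFactor, residualFactor, Function.update_of_ne hk]
    rw [unfold_multiMul, kronExcept_congr hoff, kronExcept_mul, Matrix.transpose_mul,
      residualFactor, Function.update_self, hM]
    simp only [Matrix.sub_mul, Matrix.one_mul, Matrix.mul_assoc, Q]
  calc frobSq (multiMul X (residualFactor A j))
      = matFrobSq (M - A j * (A j)ᵀ * M) := by
        rw [frobSq_eq_matFrobSq_unfold _ j, hres, matFrobSq_mul_transpose_of_transpose_mul_self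
          (kronExcept_transpose_mul_self (liftFactor_transpose_mul_self hA j) j)]
    _ ≤ matFrobSq (M - unfold Xopt j * Qᵀ) :=
        hAj.matFrobSq_sub_le ((Matrix.rank_mul_le_left _ _).trans hrank)
    _ = matFrobSq (unfold (X - Xopt) j * Qᵀ) := by rw [hM, unfold_sub, Matrix.sub_mul]
    _ = frobSq (stCore (X - Xopt) A j) := by
        rw [← reindex_unfold_stCore, matFrobSq_reindex, ← frobSq_eq_matFrobSq_unfold]
    _ = frobSq (multiMul (X - Xopt) (projFirst A j)) := by
        rw [← stPartial_eq_multiMul, stCore_eq_multiMul]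
        exact (frobSq_multiMul_of_transpose_mul_self _ (liftFactor_transpose_mul_self hA j)).symm
    _ ≤ frobSq (X - Xopt) := frobSq_multiMul_projFirst_le hA _ j

end STHOSVD

/-- quasi-optimality of the STHOSVD with processing order `[1,…,d]`:
the rank-`r` STHOSVD approximation `X̂` satisfies `‖X − X̂‖_F ≤ √d ‖X − X̂_opt‖_F`,
where `X̂_opt` is a best multilinear rank-`r` approximation of `X`. -/
theorem sthosvd_quasi_optimal
    (d : ℕ) (I r : Fin d → ℕ) (X : Tensor d I)
    (A : ∀ j, Matrix (Fin (I j)) (Fin (r j)) ℝ)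
    (hA : ∀ j : Fin d,
      IsTopLeftSingVecs
        (Matrix.reindex (finCongr (stDims_self j)) (Equiv.refl _)
          (Tensor.unfold (stCore X A (j : ℕ)) j))
        (r j) (A j))
    (Xopt : Tensor d I) (hopt : IsBestRankApprox X r Xopt) :
    Tensor.frobNorm (X - stPartial X A d) ≤ Real.sqrt d * Tensor.frobNorm (X - Xopt) := by
  have hAo : ∀ j, (A j)ᵀ * A j = 1 := fun j => (hA j).transpose_mul_self
  have hsq : Tensor.frobSq (X - stPartial X A d) ≤ d * Tensor.frobSq (X - Xopt) :=
    calc Tensor.frobSq (X - stPartial X A d)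
        = ∑ j : Fin d, Tensor.frobSq (Tensor.multiMul X (residualFactor A j)) := by
          rw [stPartial_eq_multiMul, Tensor.frobSq_sub_multiMul_of_projection X
            (projFirst_transpose_mul_self hAo d), frobSq_sub_frobSq_multiMul_projFirst hAo]
      _ ≤ ∑ _j : Fin d, Tensor.frobSq (X - Xopt) :=
          Finset.sum_le_sum fun j _ => frobSq_multiMul_residualFactor_le hAo (hA j) (hopt.1 j)
      _ = d * Tensor.frobSq (X - Xopt) := by simp
  rw [Tensor.frobNorm, Tensor.frobNorm, ← Real.sqrt_mul (Nat.cast_nonneg d)]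
  exact Real.sqrt_le_sqrt hsq
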